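/- arXiv:2204.01837 — 3 statements merged into one kernel-verified Lean document; each statement's English description precedes it below -/
import Mathlib

section
/- Let I be a nonempty finite set, let a : I → ℕ assign a positive integer a_i to each i ∈ I, and let p be a natural number with Σ_{i∈I} a_i = 2p. Consider the GSS instance with time horizon T = 2, black-start capacity curve r(t) = p for all t, and capacity curves p_i(1) = −a_i and p_i(k) = 0 for all k ≥ 2 (i.e., each generator i consumes cranking power a_i for one period and then produces nothing). Then this GSS instance admits a feasible schedule — explicitly, there exists s : I → {1,2} with p − Σ_{i : s(i)=1} a_i ≥ 0 and p − Σ_{i : s(i)=2} a_i ≥ 0 — if and only if there exists a subset S ⊆ I with Σ_{i∈S} a_i = p. (This is the correctness of the reduction of the partition problem to the generator startup sequencing problem proving Theorem 1, NP-hardness of GSS.) -/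
/-- Correctness of the reduction of the partition problem to the
generator startup sequencing (GSS) problem (Theorem 1, NP-hardness of GSS):
with time horizon `T = 2`, black-start capacity `r t = p`, and capacity curves
`pᵢ 1 = -aᵢ`, `pᵢ k = 0` for `k ≥ 2`, the GSS instance is feasible iff the
integers `aᵢ` can be partitioned into two subsets each summing to `p`. -/
theorem gss_partition_reduction {I : Type*} [Fintype I] [DecidableEq I] [Nonempty I]
    (a : I → ℕ) (ha : ∀ i, 0 < a i) (p : ℕ)
    (hsum : ∑ i, a i = 2 * p) :
    (∃ s : I → ℕ, (∀ i, s i = 1 ∨ s i = 2) ∧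
      0 ≤ (p : ℤ) - ∑ i ∈ Finset.univ.filter (fun i => s i = 1), (a i : ℤ) ∧
      0 ≤ (p : ℤ) - ∑ i ∈ Finset.univ.filter (fun i => s i = 2), (a i : ℤ)) ↔
    ∃ S : Finset I, ∑ i ∈ S, a i = p := by
  constructor
  · rintro ⟨s, hs, h1, h2⟩
    refine ⟨Finset.univ.filter (fun i => s i = 1), ?_⟩
    have hsplit : ∑ i ∈ Finset.univ.filter (fun i => s i = 1), a i +
        ∑ i ∈ Finset.univ.filter (fun i => s i = 2), a i = 2 * p := by
      rw [← hsum, ← Finset.sum_filter_add_sum_filter_not Finset.univ (fun i => s i = 1)]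
      congr 1
      apply Finset.sum_congr _ (fun _ _ => rfl)
      ext i
      simp only [Finset.mem_filter, Finset.mem_univ, true_and]
      rcases hs i with h | h <;> simp [h]
    have h1' : ∑ i ∈ Finset.univ.filter (fun i => s i = 1), a i ≤ p := by
      have : ((∑ i ∈ Finset.univ.filter (fun i => s i = 1), a i : ℕ) : ℤ) ≤ (p : ℤ) := by
        rw [Nat.cast_sum]; linarith
      exact_mod_cast this
    have h2' : ∑ i ∈ Finset.univ.filter (fun i => s i = 2), a i ≤ p := by
      have : ((∑ i ∈ Finset.univ.filter (fun i => s i = 2), a i : ℕ) : ℤ) ≤ (p : ℤ) := by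
        rw [Nat.cast_sum]; linarith
      exact_mod_cast this
    omega
  · rintro ⟨S, hS⟩
    refine ⟨fun i => if i ∈ S then 1 else 2, fun i => by by_cases h : i ∈ S <;> simp [h], ?_, ?_⟩
    · have : Finset.univ.filter (fun i => (if i ∈ S then 1 else 2) = 1) = S := by
        ext i; by_cases h : i ∈ S <;> simp [h]
      rw [this]
      have : ∑ i ∈ S, (a i : ℤ) = (p : ℤ) := by exact_mod_cast congrArg (Nat.cast : ℕ → ℤ) hS
      omega
    · have heq : Finset.univ.filter (fun i => (if i ∈ S then 1 else 2) = 2) = Sᶜ := by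
        ext i; by_cases h : i ∈ S <;> simp [h]
      rw [heq]
      have htot : ∑ i ∈ S, a i + ∑ i ∈ Sᶜ, a i = 2 * p := by
        rw [← hsum, Finset.sum_add_sum_compl]
      have : ∑ i ∈ Sᶜ, a i = p := by omega
      have : ∑ i ∈ Sᶜ, (a i : ℤ) = (p : ℤ) := by exact_mod_cast congrArg (Nat.cast : ℕ → ℤ) this
      omega
end

section
/- Let G = (V, E) be a finite simple graph with black-start nodes J ⊆ V and non-black-start nodes I = V \ J, with time horizon T ≥ 1, black-start capacity curves r^j : ℕ → ℝ for j ∈ J and capacity curves p_i : ℕ → ℝ for i ∈ I. If there exists a feasible PPSR plan on G with restoration time RT, then the aggregated GSS instance on generator set I with black-start capacity curve r(t) = Σ_{j∈J} r^j(t) and the same capacity curves p_i admits a feasible schedule with restoration time at most RT. Consequently, the minimum restoration time of the aggregated single-black-start GSS problem is a lower bound for the minimum restoration time of the parallel power system restoration problem on G. (Theorem 2.) -/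
/-- (Theorem 2.) If there is a feasible PPSR plan on `G` with
restoration time `RT`, then the aggregated GSS instance (single black-start node
aggregating all black-start capacities) admits a feasible schedule with restoration
time at most `RT`; hence the optimal aggregated GSS time lower-bounds the optimal
PPSR restoration time. -/
theorem aggregated_gss_lower_bound {V : Type*} [Fintype V] [DecidableEq V]
    (G : SimpleGraph V) (J : Finset V)
    (T : ℕ) (hT : 1 ≤ T)
    (r : V → ℕ → ℝ) (p : V → ℕ → ℝ)
    (σ : V → V) (hσJ : ∀ v, σ v ∈ J) (hσid : ∀ j ∈ J, σ j = j)
    (hconn : ∀ j ∈ J, (G.induce {v | σ v = j}).Connected)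
    (s : V → ℕ) (hs : ∀ i ∈ Finset.univ \ J, 1 ≤ s i ∧ s i ≤ T)
    (hfeas : ∀ j ∈ J, ∀ t, 1 ≤ t → t ≤ T →
      0 ≤ r j t + ∑ i ∈ (Finset.univ \ J).filter (fun i => σ i = j ∧ s i ≤ t),
        p i (t - s i + 1))
    (RT : ℕ) (hRT : ∀ i ∈ Finset.univ \ J, s i ≤ RT) :
    ∃ s' : V → ℕ, (∀ i ∈ Finset.univ \ J, 1 ≤ s' i ∧ s' i ≤ T ∧ s' i ≤ RT) ∧
      ∀ t, 1 ≤ t → t ≤ T →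
        0 ≤ (∑ j ∈ J, r j t) +
          ∑ i ∈ (Finset.univ \ J).filter (fun i => s' i ≤ t), p i (t - s' i + 1) := by
  refine ⟨s, fun i hi => ⟨(hs i hi).1, (hs i hi).2, hRT i hi⟩, fun t ht1 ht2 => ?_⟩
  have key : ∑ j ∈ J, (r j t + ∑ i ∈ (Finset.univ \ J).filter
      (fun i => σ i = j ∧ s i ≤ t), p i (t - s i + 1))
      = (∑ j ∈ J, r j t) + ∑ i ∈ (Finset.univ \ J).filter (fun i => s i ≤ t),
        p i (t - s i + 1) := by
    rw [Finset.sum_add_distrib]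
    congr 1
    rw [← Finset.sum_biUnion]
    · congr 1
      ext i
      simp only [Finset.mem_biUnion, Finset.mem_filter, Finset.mem_sdiff,
        Finset.mem_univ, true_and]
      constructor
      · rintro ⟨j, hj, hiJ, _, hst⟩; exact ⟨hiJ, hst⟩
      · rintro ⟨hiJ, hst⟩; exact ⟨σ i, hσJ i, hiJ, rfl, hst⟩
    · intro a _ b _ hab
      refine Finset.disjoint_left.mpr ?_
      intro x hx hx'
      simp only [Finset.mem_filter] at hx hx'
      exact hab (hx.2.1 ▸ hx'.2.1)
  calc (0:ℝ) ≤ ∑ j ∈ J, (r j t + ∑ i ∈ (Finset.univ \ J).filter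
        (fun i => σ i = j ∧ s i ≤ t), p i (t - s i + 1)) :=
      Finset.sum_nonneg fun j hj => hfeas j hj t ht1 ht2
    _ = _ := key
end

section
/- Let G be a finite tree with vertex set V and let J ⊆ V be a nonempty set of root nodes. Let P ⊆ ℝ^{V×J} be the polyhedron of all x : V × J → ℝ satisfying: x(v,j) ≥ 0 for all v ∈ V and j ∈ J; x(j,j) = 1 for all j ∈ J and x(j,j') = 0 for all distinct j, j' ∈ J; Σ_{j∈J} x(v,j) = 1 for every v ∈ V \ J; and, for every v ∈ V \ J and every j ∈ J, x(v,j) ≤ x(v',j), where v' is the vertex adjacent to v on the unique path in G from v to j. Then every extreme point of P (every point of P that is not the midpoint of two distinct points of P) has all coordinates in {0,1}; equivalently, P is the convex hull of its {0,1}-valued points. (Lemma 1: integrality of the tree-partitioning formulation.) -/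
/-!
Let `x ∈ P` have a fractional coordinate `x r j₀` and root the tree at `r`. A direction `d`
with `x ± ε d ∈ P` for small `ε` must vanish on the integral coordinates, have zero row sums,
and satisfy `d v j = d v' j` on every tight constraint `x v j = x v' j`. In a tree a tight
fractional constraint always joins a vertex to its parent, so `d` is pinned down by its values
on the *free* coordinates: fractional ones that differ from the parent's. A vertex whose
fractional coordinates all equal its parent's has the same row as its parent, so only vertices
with a free coordinate impose a row-sum equation. Each of them has a free coordinate and the root
has two (a fractional row has two fractional entries), so there are more unknowns than equations
and a nonzero `d` exists.
-/

open Filter Topology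

namespace SimpleGraph.IsTree

variable {V : Type*} {G : SimpleGraph V} (hG : G.IsTree)

/-- The neighbour of `u` on the path to `v` (and `v` itself if `u = v`). -/
noncomputable def next (u v : V) : V := (hG.existsUnique_path u v).exists.choose.snd

variable {hG}

theorem snd_eq_next {u v : V} {p : G.Walk u v} (hp : p.IsPath) : p.snd = hG.next u v := by
  have h := hG.existsUnique_path u v
  rw [next, h.unique hp h.exists.choose_spec]

theorem next_self (v : V) : hG.next v v = v := by
  rw [← snd_eq_next (p := Walk.nil) Walk.IsPath.nil]; rfl

theorem adj_next {u v : V} (h : u ≠ v) : G.Adj u (hG.next u v) := by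
  obtain ⟨p, hp, -⟩ := hG.existsUnique_path u v
  rw [← snd_eq_next hp]
  exact p.adj_snd (Walk.not_nil_of_ne h)

theorem next_eq_or_next_eq {a b : V} (hab : G.Adj a b) (c : V) :
    hG.next a c = b ∨ hG.next b c = a := by
  obtain ⟨p, hp, -⟩ := hG.existsUnique_path b c
  by_cases ha : a ∈ p.support
  · exact .inr (snd_eq_next hp ▸ (hG.isAcyclic.eq_snd_of_adj_start hp hab.symm ha).symm)
  · exact .inl (snd_eq_next (hp.cons ha) ▸ Walk.snd_cons p hab)

theorem induction_next (r : V) {P : V → Prop} (root : P r)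
    (step : ∀ v, v ≠ r → P (hG.next v r) → P v) (v : V) : P v := by
  obtain ⟨p, hp, -⟩ := hG.existsUnique_path v r
  induction p with
  | nil => exact root
  | @cons v u w hadj q ih =>
    have hv : v ≠ w := by
      rintro rfl
      exact ((Walk.cons_isPath_iff _ _).1 hp).2 q.end_mem_support
    refine step v hv ?_
    rw [← snd_eq_next hp, Walk.snd_cons]
    exact ih root step hp.of_cons

end SimpleGraph.IsTree

theorem exists_ne_zero_forall_apply_eq_zero {K W ι : Type*} [Field K] [AddCommGroup W] [Module K W]
    [FiniteDimensional K W] [Fintype ι] (ℓ : ι → W →ₗ[K] K)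
    (h : Fintype.card ι < Module.finrank K W) : ∃ w ≠ 0, ∀ i, ℓ i w = 0 := by
  have hker := LinearMap.ker_ne_bot_of_finrank_lt (f := LinearMap.pi ℓ) (by simpa using h)
  obtain ⟨w, hw, hw0⟩ := Submodule.exists_mem_ne_zero_of_ne_bot hker
  exact ⟨w, hw0, fun i ↦ congrFun (LinearMap.mem_ker.1 hw) i⟩

theorem eventually_add_mul_le_add_mul {a b c e : ℝ} (hab : a ≤ b) (hce : a = b → c = e) :
    ∀ᶠ ε in 𝓝 (0 : ℝ), a + ε * c ≤ b + ε * e := by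
  obtain rfl | hlt := hab.eq_or_lt
  · simp [hce rfl]
  · refine (ContinuousAt.eventually_lt (by fun_prop) (by fun_prop) (by simpa)).mono
      fun _ h ↦ h.le

namespace TreePartition

open SimpleGraph Set

variable {V : Type*} {G : SimpleGraph V} {hG : G.IsTree} {J : Finset V}

structure IsFeasible (hG : G.IsTree) (J : Finset V) (x : V → J → ℝ) : Prop where
  nonneg : ∀ v j, 0 ≤ x v j
  root_self : ∀ j : J, x j j = 1
  root_ne : ∀ j j' : J, j ≠ j' → x j j' = 0
  sum_eq_one : ∀ v ∉ J, ∑ j, x v j = 1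
  le_next : ∀ v ∉ J, ∀ j : J, x v j ≤ x (hG.next v j) j

theorem isFeasible_iff_forall_isPath {x : V → J → ℝ} :
    IsFeasible hG J x ↔ (∀ v j, 0 ≤ x v j) ∧ (∀ j : J, x j j = 1) ∧
      (∀ j j' : J, j ≠ j' → x j j' = 0) ∧ (∀ v, v ∉ J → ∑ j, x v j = 1) ∧
      (∀ v, v ∉ J → ∀ j : J, ∀ w : G.Walk v j, w.IsPath → x v j ≤ x (w.getVert 1) j) := by
  refine ⟨fun ⟨h₁, h₂, h₃, h₄, h₅⟩ ↦ ⟨h₁, h₂, h₃, h₄, fun v hv j w hw ↦ ?_⟩,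
    fun ⟨h₁, h₂, h₃, h₄, h₅⟩ ↦ ⟨h₁, h₂, h₃, h₄, fun v hv j ↦ ?_⟩⟩
  · rw [show w.getVert 1 = hG.next v j from IsTree.snd_eq_next hw]
    exact h₅ v hv j
  · obtain ⟨w, hw, -⟩ := hG.existsUnique_path v j
    exact IsTree.snd_eq_next hw ▸ h₅ v hv j w hw

namespace IsFeasible

variable {x : V → J → ℝ} (hx : IsFeasible hG J x)
include hx

theorem eq_zero_or_eq_one_of_mem {v : V} (hv : v ∈ J) (j : J) : x v j = 0 ∨ x v j = 1 := by
  obtain rfl | hne := eq_or_ne ⟨v, hv⟩ j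
  · exact .inr (hx.root_self ⟨v, hv⟩)
  · exact .inl (hx.root_ne _ _ hne)

theorem le_one {v : V} (hv : v ∉ J) (j : J) : x v j ≤ 1 :=
  hx.sum_eq_one v hv ▸ Finset.single_le_sum (fun j _ ↦ hx.nonneg v j) (Finset.mem_univ j)

theorem mem_Ioo_of_ne {v : V} {j : J} (h₀ : x v j ≠ 0) (h₁ : x v j ≠ 1) : x v j ∈ Ioo 0 1 := by
  by_cases hv : v ∈ J
  · exact (hx.eq_zero_or_eq_one_of_mem hv j).elim (absurd · h₀) (absurd · h₁)
  · exact ⟨(hx.nonneg v j).lt_of_ne' h₀, (hx.le_one hv j).lt_of_ne h₁⟩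

theorem notMem_of_mem_Ioo {v : V} {j : J} (h : x v j ∈ Ioo 0 1) : v ∉ J := fun hv ↦ by
  rcases hx.eq_zero_or_eq_one_of_mem hv j with h' | h' <;> simp [h'] at h

theorem eq_zero_of_notMem_Ioo {v : V} {j₀ j : J} (h₀ : x v j₀ ∈ Ioo 0 1) (h : x v j ∉ Ioo 0 1) :
    x v j = 0 := by
  classical
  have hv := hx.notMem_of_mem_Ioo h₀
  have hj : j ≠ j₀ := by rintro rfl; exact h h₀
  have hpair : x v j + x v j₀ ≤ 1 := by
    rw [← hx.sum_eq_one v hv, ← Finset.sum_pair hj]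
    exact Finset.sum_le_sum_of_subset_of_nonneg (Finset.subset_univ _)
      (fun j _ _ ↦ hx.nonneg v j)
  by_contra hne
  exact h ⟨(hx.nonneg v j).lt_of_ne' hne, by linarith [h₀.1]⟩

theorem exists_ne_mem_Ioo {v : V} {j₀ : J} (h₀ : x v j₀ ∈ Ioo 0 1) :
    ∃ j ≠ j₀, x v j ∈ Ioo 0 1 := by
  by_contra! h
  have hsum := hx.sum_eq_one v (hx.notMem_of_mem_Ioo h₀)
  rw [Finset.sum_eq_single j₀ (fun j _ hj ↦ hx.eq_zero_of_notMem_Ioo h₀ (h j hj))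
    (by simp)] at hsum
  exact h₀.2.ne hsum

theorem row_eq_of_forall_mem_Ioo {v u : V} {j₀ : J} (h₀ : x v j₀ ∈ Ioo 0 1)
    (h : ∀ j, x v j ∈ Ioo 0 1 → x v j = x u j) : x v = x u := by
  have hle : ∀ j ∈ Finset.univ, x v j ≤ x u j := fun j _ ↦ by
    by_cases hj : x v j ∈ Ioo 0 1
    · exact (h j hj).le
    · exact hx.eq_zero_of_notMem_Ioo h₀ hj ▸ hx.nonneg u j
  have hu : u ∉ J := hx.notMem_of_mem_Ioo (h j₀ h₀ ▸ h₀)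
  funext j
  refine ((Finset.sum_eq_sum_iff_of_le hle).1 ?_ j (Finset.mem_univ j))
  rw [hx.sum_eq_one v (hx.notMem_of_mem_Ioo h₀), hx.sum_eq_one u hu]

end IsFeasible

structure IsFeasibleDirection (hG : G.IsTree) (J : Finset V) (x d : V → J → ℝ) : Prop where
  eq_zero : ∀ v j, x v j ∉ Ioo 0 1 → d v j = 0
  sum_eq_zero : ∀ v, ∑ j, d v j = 0
  eq_next : ∀ v ∉ J, ∀ j : J, x v j = x (hG.next v j) j → d v j = d (hG.next v j) j

namespace IsFeasible

variable [Finite V] {x d : V → J → ℝ} (hx : IsFeasible hG J x)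
include hx

theorem eventually_add_smul (hd : IsFeasibleDirection hG J x d) :
    ∀ᶠ ε in 𝓝 (0 : ℝ), IsFeasible hG J (x + ε • d) := by
  have hroot : ∀ j j' : J, d j j' = 0 := fun j j' ↦ hd.eq_zero _ _ fun h ↦ by
    rcases hx.eq_zero_or_eq_one_of_mem j.2 j' with h' | h' <;> simp [h'] at h
  have hnonneg : ∀ v j, ∀ᶠ ε in 𝓝 (0 : ℝ), 0 + ε * 0 ≤ x v j + ε * d v j := fun v j ↦
    eventually_add_mul_le_add_mul (hx.nonneg v j) fun h ↦ (hd.eq_zero v j (by simp [← h])).symm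
  have hnext : ∀ v j, ∀ᶠ ε in 𝓝 (0 : ℝ),
      v ∉ J → x v j + ε * d v j ≤ x (hG.next v j) j + ε * d (hG.next v j) j := fun v j ↦ by
    by_cases hv : v ∈ J
    · exact .of_forall fun _ h ↦ absurd hv h
    · exact (eventually_add_mul_le_add_mul (hx.le_next v hv j) (hd.eq_next v hv j)).mono
        fun _ h _ ↦ h
  filter_upwards [eventually_all.2 fun v ↦ eventually_all.2 (hnonneg v),
    eventually_all.2 fun v ↦ eventually_all.2 (hnext v)] with ε hε₁ hε₂
  refine ⟨fun v j ↦ by simpa using hε₁ v j, fun j ↦ by simp [hx.root_self, hroot],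
    fun j j' hne ↦ by simp [hx.root_ne j j' hne, hroot], fun v hv ↦ ?_,
    fun v hv j ↦ hε₂ v j hv⟩
  simp only [Pi.add_apply, Pi.smul_apply, smul_eq_mul, Finset.sum_add_distrib, ← Finset.mul_sum,
    hx.sum_eq_one v hv, hd.sum_eq_zero v, mul_zero, add_zero]

theorem exists_midpoint (hd : IsFeasibleDirection hG J x d) (hd₀ : d ≠ 0) :
    ∃ y z, IsFeasible hG J y ∧ IsFeasible hG J z ∧ y ≠ z ∧ x = (1 / 2 : ℝ) • (y + z) := by
  have h := hx.eventually_add_smul hd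
  have h' := h.and ((continuous_neg.tendsto' (0 : ℝ) 0 neg_zero).eventually h)
  obtain ⟨ε, ⟨hy, hz⟩, hε⟩ := ((h'.filter_mono nhdsWithin_le_nhds).and
    (self_mem_nhdsWithin (s := Ioi 0))).exists
  refine ⟨x + ε • d, x + (-ε) • d, hy, hz, fun heq ↦ hd₀ (funext fun v ↦ funext fun j ↦ ?_), ?_⟩
  · have := congrFun (congrFun heq v) j
    simp only [Pi.add_apply, Pi.smul_apply, smul_eq_mul] at this
    have : ε * d v j = 0 := by linarith
    simpa [hε.ne'] using this
  · ext v j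
    simp only [Pi.add_apply, Pi.smul_apply, smul_eq_mul]
    ring

end IsFeasible

def IsTied (hG : G.IsTree) (r : V) (x : V → J → ℝ) (v : V) (j : J) : Prop :=
  v ≠ r ∧ x v j = x (hG.next v r) j

def IsFree (hG : G.IsTree) (r : V) (x : V → J → ℝ) (p : V × J) : Prop :=
  x p.1 p.2 ∈ Ioo 0 1 ∧ ¬IsTied hG r x p.1 p.2

structure IsTiedDirection (hG : G.IsTree) (r : V) (x d : V → J → ℝ) : Prop where
  eq_zero : ∀ v j, x v j ∉ Ioo 0 1 → d v j = 0
  eq_next_of_isTied : ∀ v j, x v j ∈ Ioo 0 1 → IsTied hG r x v j → d v j = d (hG.next v r) j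
  sum_eq_zero : ∀ v, (∃ j, IsFree hG r x (v, j)) → ∑ j, d v j = 0

variable {r : V} {x d : V → J → ℝ}

theorem IsTiedDirection.isFeasibleDirection (hx : IsFeasible hG J x)
    (hd : IsTiedDirection hG r x d) : IsFeasibleDirection hG J x d where
  eq_zero := hd.eq_zero
  sum_eq_zero := by
    have hzero : ∀ v, (∀ j, x v j ∉ Ioo 0 1) → ∑ j, d v j = 0 := fun v h ↦ by
      simp [hd.eq_zero v _ (h _)]
    refine hG.induction_next r ?_ fun v hv ih ↦ ?_
    · by_cases h : ∃ j, x r j ∈ Ioo 0 1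
      · obtain ⟨j, hj⟩ := h
        exact hd.sum_eq_zero r ⟨j, hj, fun h ↦ h.1 rfl⟩
      · exact hzero r (not_exists.1 h)
    by_cases hfree : ∃ j, IsFree hG r x (v, j)
    · exact hd.sum_eq_zero v hfree
    by_cases hfrac : ∃ j, x v j ∈ Ioo 0 1
    · obtain ⟨j₀, h₀⟩ := hfrac
      have htied : ∀ j, x v j ∈ Ioo 0 1 → IsTied hG r x v j := fun j hj ↦
        not_not.1 fun h ↦ hfree ⟨j, hj, h⟩
      have hrow := hx.row_eq_of_forall_mem_Ioo h₀ fun j hj ↦ (htied j hj).2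
      rw [← ih]
      refine Finset.sum_congr rfl fun j _ ↦ ?_
      by_cases hj : x v j ∈ Ioo 0 1
      · exact hd.eq_next_of_isTied v j hj (htied j hj)
      · rw [hd.eq_zero v j hj, hd.eq_zero _ j (hrow ▸ hj)]
    · exact hzero v (not_exists.1 hfrac)
  eq_next v hv j heq := by
    by_cases hf : x v j ∈ Ioo 0 1
    · have hadj := hG.adj_next (u := v) (v := j) fun h ↦ hv (h ▸ j.2)
      have hne_r : ∀ {a b}, G.Adj a b → hG.next a r = b → a ≠ r := by
        rintro a b hab h rfl
        exact hab.ne ((hG.next_self a).symm.trans h)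
      rcases hG.next_eq_or_next_eq hadj r with h | h
      · have := hd.eq_next_of_isTied v j hf ⟨hne_r hadj h, by rw [h]; exact heq⟩
        rwa [h] at this
      · have := hd.eq_next_of_isTied _ j (heq ▸ hf) ⟨hne_r hadj.symm h, by rw [h]; exact heq.symm⟩
        rw [h] at this
        exact this.symm
    · rw [hd.eq_zero _ _ hf, hd.eq_zero _ _ (heq ▸ hf)]

theorem card_rows_lt_card_isFree [Finite V] (hx : IsFeasible hG J x) {j₀ : J}
    (h₀ : x r j₀ ∈ Ioo 0 1) :
    Nat.card {v // ∃ j, IsFree hG r x (v, j)} < Nat.card {p // IsFree hG r x p} := by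
  classical
  have := Fintype.ofFinite V
  obtain ⟨j₁, hne, h₁⟩ := hx.exists_ne_mem_Ioo h₀
  simp only [Nat.card_eq_fintype_card]
  refine Fintype.card_lt_of_surjective_not_injective (fun p ↦ ⟨p.1.1, p.1.2, p.2⟩)
    (fun ⟨v, j, h⟩ ↦ ⟨⟨(v, j), h⟩, rfl⟩) fun hinj ↦ hne ?_
  exact congrArg (fun p : {p // IsFree hG r x p} ↦ p.1.2)
    (@hinj ⟨(r, j₁), h₁, fun h ↦ h.1 rfl⟩ ⟨(r, j₀), h₀, fun h ↦ h.1 rfl⟩ rfl)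

theorem exists_ne_zero_isTiedDirection [Finite V] (hx : IsFeasible hG J x) {j₀ : J}
    (h₀ : x r j₀ ∈ Ioo 0 1) : ∃ d ≠ 0, IsTiedDirection hG r x d := by
  classical
  have := Fintype.ofFinite V
  let ι := {p : V × J // ¬IsFree hG r x p} ⊕ {v // ∃ j, IsFree hG r x (v, j)}
  let ev (p : V × J) : (V × J → ℝ) →ₗ[ℝ] ℝ := LinearMap.proj p
  let ℓ : ι → (V × J → ℝ) →ₗ[ℝ] ℝ
    | .inl p => ev p.1 - if x p.1.1 p.1.2 ∈ Ioo 0 1 then ev (hG.next p.1.1 r, p.1.2) else 0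
    | .inr v => ∑ j, ev (v, j)
  have hcard : Fintype.card ι < Module.finrank ℝ (V × J → ℝ) := by
    have := card_rows_lt_card_isFree hx h₀
    simp only [Nat.card_eq_fintype_card] at this
    rw [Module.finrank_pi, Fintype.card_sum, Fintype.card_subtype_compl]
    have := Fintype.card_subtype_le (IsFree hG r x)
    omega
  obtain ⟨w, hw₀, hw⟩ := exists_ne_zero_forall_apply_eq_zero ℓ hcard
  refine ⟨fun v j ↦ w (v, j), fun h ↦ hw₀ (funext fun p ↦ congrFun (congrFun h p.1) p.2),
    ⟨fun v j hj ↦ ?_, fun v j hf hj ↦ ?_, fun v hv ↦ ?_⟩⟩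
  · have := hw (.inl ⟨(v, j), fun h ↦ hj h.1⟩)
    simpa only [ℓ, ev, if_neg hj, sub_zero, LinearMap.proj_apply] using this
  · simpa only [ℓ, ev, if_pos hf, LinearMap.sub_apply, LinearMap.proj_apply, sub_eq_zero] using
      hw (.inl ⟨(v, j), fun h ↦ h.2 hj⟩)
  · simpa [ℓ, ev] using hw (.inr ⟨v, hv⟩)

end TreePartition

open TreePartition in
theorem tree_partition_integrality_general {V : Type*} [Fintype V]
    (G : SimpleGraph V) (hGconn : G.Connected) (hGacyc : G.IsAcyclic)
    (J : Finset V)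
    (P : Set (V → {j // j ∈ J} → ℝ))
    (hP : P = {x | (∀ v j, 0 ≤ x v j) ∧
      (∀ j : {j // j ∈ J}, x j.1 j = 1) ∧
      (∀ j j' : {j // j ∈ J}, j ≠ j' → x j.1 j' = 0) ∧
      (∀ v, v ∉ J → ∑ j, x v j = 1) ∧
      (∀ v, v ∉ J → ∀ j : {j // j ∈ J}, ∀ w : G.Walk v j.1, w.IsPath →
        x v j ≤ x (w.getVert 1) j)}) :
    ∀ x ∈ P, (¬ ∃ y ∈ P, ∃ z ∈ P, y ≠ z ∧ x = (1 / 2 : ℝ) • (y + z)) →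
      ∀ v j, x v j = 0 ∨ x v j = 1 := by
  have hG : G.IsTree := ⟨hGconn, hGacyc⟩
  obtain rfl : P = {x | IsFeasible hG J x} := by
    rw [hP]
    exact Set.ext fun x ↦ isFeasible_iff_forall_isPath.symm
  intro x hx hext v j
  by_contra! h
  obtain ⟨d, hd₀, hd⟩ := exists_ne_zero_isTiedDirection hx (hx.mem_Ioo_of_ne h.1 h.2)
  obtain ⟨y, z, hy, hz, hyz, rfl⟩ := hx.exists_midpoint (hd.isFeasibleDirection hx) hd₀
  exact hext ⟨y, hy, z, hz, hyz, rfl⟩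

/-- (Lemma 1: integrality of the tree-partitioning formulation.)
On a finite tree `G` with root set `J`, every extreme point (a point that is not the
midpoint of two distinct points) of the polyhedron `P` defined by nonnegativity,
the root constraints, the partition constraints, and the path-monotonicity
constraints `x v j ≤ x v' j` (where `v'` is the second vertex on the unique path
from `v` to `j`) has all coordinates in `{0, 1}`. -/
theorem tree_partition_integrality {V : Type*} [Fintype V] [DecidableEq V]
    (G : SimpleGraph V) (hGconn : G.Connected) (hGacyc : G.IsAcyclic)
    (J : Finset V) (hJ : J.Nonempty)
    (P : Set (V → {j // j ∈ J} → ℝ))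
    (hP : P = {x | (∀ v j, 0 ≤ x v j) ∧
      (∀ j : {j // j ∈ J}, x j.1 j = 1) ∧
      (∀ j j' : {j // j ∈ J}, j ≠ j' → x j.1 j' = 0) ∧
      (∀ v, v ∉ J → ∑ j, x v j = 1) ∧
      (∀ v, v ∉ J → ∀ j : {j // j ∈ J}, ∀ w : G.Walk v j.1, w.IsPath →
        x v j ≤ x (w.getVert 1) j)}) :
    ∀ x ∈ P, (¬ ∃ y ∈ P, ∃ z ∈ P, y ≠ z ∧ x = (1 / 2 : ℝ) • (y + z)) →
      ∀ v j, x v j = 0 ∨ x v j = 1 :=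
  tree_partition_integrality_general G hGconn hGacyc J P hP
end
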